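/- Let k be a field and 𝒯 = (T, V̄, W̄) a neat tree of presentations over k. Let (S, v̄) be a pre-vector of 𝒯 and (S', w̄) a pre-covector of 𝒯 such that the intersection S ∩ S' of the two subtrees contains no ray (no one-way infinite path). Then the underlying vector of (S, v̄) and the underlying covector of (S', w̄) are orthogonal: the intersection of their supports is finite and Σ_{e ∈ E(𝒯)} of the product of their values at e equals 0. -/

import Mathlib

open Function Set

noncomputable section

variable {α k : Type*} [Field k]

/-- Axiom (O2) for a pair of families of subsets of the ground set `E`. -/
def AxO2 (E : Set α) (𝒞 𝒟 : Set (Set α)) : Prop :=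
  ∀ P Q : Set α, ∀ e : α, Disjoint P Q → e ∉ P → e ∉ Q → P ∪ Q ∪ {e} = E →
    (∃ C ∈ 𝒞, e ∈ C ∧ C ⊆ P ∪ {e}) ∨ (∃ D ∈ 𝒟, e ∈ D ∧ D ⊆ Q ∪ {e})

/-- Two vectors are orthogonal: supports intersect finitely and the sum of products is zero. -/
def Orthog (v w : α → k) : Prop :=
  (support v ∩ support w).Finite ∧ ∑ᶠ e, v e * w e = 0

/-- The subspace of `k^α` of functions supported in `E` (the formal meaning of `k^E`). -/
def FunOn (E : Set α) : Submodule k (α → k) where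
  carrier := {v | support v ⊆ E}
  add_mem' hf hg := (support_add _ _).trans (union_subset hf hg)
  zero_mem' := by simp
  smul_mem' c f hf := (support_const_smul_subset c f).trans hf

/-- The set `S(V)` of supports of elements of `V`. -/
def suppSet (V : Submodule k (α → k)) : Set (Set α) := support '' (V : Set (α → k))

/-- A presentation on the ground set `E` over `k`: a pair of orthogonal subspaces of `k^E`
whose families of supports satisfy (O2). -/
def IsPresentationOn (E : Set α) (V W : Submodule k (α → k)) : Prop :=
  V ≤ FunOn E ∧ W ≤ FunOn E ∧ (∀ v ∈ V, ∀ w ∈ W, Orthog v w) ∧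
    AxO2 E (suppSet V) (suppSet W)

/-- Minimal nonempty elements of a family of sets. -/
def MinNE (𝒜 : Set (Set α)) (o : Set α) : Prop :=
  o ∈ 𝒜 ∧ o.Nonempty ∧ ∀ o' ∈ 𝒜, o'.Nonempty → o' ⊆ o → o' = o

/-- A circuit of a matroid: a minimal dependent set. -/
def MatCircuit (M : Matroid α) (C : Set α) : Prop := Minimal M.Dep C

/-- The pair `(V, W)` presents the matroid `M` on ground set `E`. -/
def Presents (E : Set α) (V W : Submodule k (α → k)) (M : Matroid α) : Prop :=
  M.E = E ∧ (∀ C, MatCircuit M C ↔ MinNE (suppSet V) C) ∧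
    (∀ D, MatCircuit M✶ D ↔ MinNE (suppSet W) D)

/-- Restriction of a vector to `X`, as a linear endomap of `k^α` (zeroing outside `X`). -/
def indLM (X : Set α) : (α → k) →ₗ[k] (α → k) where
  toFun v := X.indicator v
  map_add' f g := by
    funext a
    by_cases h : a ∈ X <;> simp [Set.indicator_of_mem, Set.indicator_of_notMem, h]
  map_smul' c f := by
    funext a
    by_cases h : a ∈ X <;> simp [Set.indicator_of_mem, Set.indicator_of_notMem, h]

/-- Contraction `V.X` of a subspace to `X`. -/
def conV (V : Submodule k (α → k)) (X : Set α) : Submodule k (α → k) :=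
  Submodule.map (indLM X) V

/-- Restriction of a pair `(V,W)` to the ground set `X`: `(V↾X, W.X)`. -/
def pairRes (Pr : Submodule k (α → k) × Submodule k (α → k)) (X : Set α) :
    Submodule k (α → k) × Submodule k (α → k) :=
  (Pr.1 ⊓ FunOn X, conV Pr.2 X)

/-- Contraction of a pair `(V,W)` to the ground set `X`: `(V.X, W↾X)`. -/
def pairCon (Pr : Submodule k (α → k) × Submodule k (α → k)) (X : Set α) :
    Submodule k (α → k) × Submodule k (α → k) :=
  (conV Pr.1 X, Pr.2 ⊓ FunOn X)

/-- A set `I` is `Π`-independent (w.r.t. the vector subspace `V`): it includes no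
nonempty support of a vector. -/
def PresIndep (V : Submodule k (α → k)) (I : Set α) : Prop :=
  ∀ v ∈ V, support v ⊆ I → v = 0

end

open Function Set

/-- A tree of presentations over `k`: a tree `T` on the node type `τ` with a presentation
`(Vb t, Wb t)` on the ground set `Es t ⊆ α` at each node `t`, such that the ground sets of
two distinct nodes have finite intersection, and intersect only if the nodes are adjacent. -/
structure TreePres (k α τ : Type*) [Field k] where
  T : SimpleGraph τ
  tree : T.IsTree
  Es : τ → Set α
  Vb : τ → Submodule k (α → k)
  Wb : τ → Submodule k (α → k)
  pres : ∀ t, IsPresentationOn (Es t) (Vb t) (Wb t)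
  finInter : ∀ t t', t ≠ t' → (Es t ∩ Es t').Finite
  adjInter : ∀ t t', (Es t ∩ Es t').Nonempty → t = t' ∨ T.Adj t t'

namespace TreePres

variable {k α τ : Type*} [Field k]

/-- The ground set `E(𝒯)` of a tree of presentations: the union of all `E(t)` minus
all the sets of dummy edges `E(tt') = E(t) ∩ E(t')`. -/
def ground (𝒯 : TreePres k α τ) : Set α :=
  (⋃ t, 𝒯.Es t) \ ⋃ (t) (t') (_ : 𝒯.T.Adj t t'), 𝒯.Es t ∩ 𝒯.Es t'

/-- `(S, vb)` is a pre-vector of `𝒯`: `S` spans a subtree, `vb t ∈ V̄(t)` for `t ∈ S`, and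
for every edge `tu` of `T` with `t ∈ S`: if `u ∈ S` then
`vb t ↾ E(tu) = vb u ↾ E(tu) ≠ 0`, and otherwise `vb t ↾ E(tu) = 0`. -/
def IsPreVector (𝒯 : TreePres k α τ) (S : Set τ) (vb : τ → α → k) : Prop :=
  ((𝒯.T.induce S).Connected) ∧ (∀ t ∈ S, vb t ∈ 𝒯.Vb t) ∧
    ∀ t ∈ S, ∀ u : τ, 𝒯.T.Adj t u →
      (u ∈ S → ((𝒯.Es t ∩ 𝒯.Es u).indicator (vb t) = (𝒯.Es t ∩ 𝒯.Es u).indicator (vb u) ∧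
        (𝒯.Es t ∩ 𝒯.Es u).indicator (vb t) ≠ 0)) ∧
      (u ∉ S → (𝒯.Es t ∩ 𝒯.Es u).indicator (vb t) = 0)

/-- `(S, wb)` is a pre-covector of `𝒯`: as for pre-vectors, but with
`wb t ↾ E(tu) = − wb u ↾ E(tu) ≠ 0` on edges of `S` (note the sign change). -/
def IsPreCovector (𝒯 : TreePres k α τ) (S : Set τ) (wb : τ → α → k) : Prop :=
  ((𝒯.T.induce S).Connected) ∧ (∀ t ∈ S, wb t ∈ 𝒯.Wb t) ∧
    ∀ t ∈ S, ∀ u : τ, 𝒯.T.Adj t u →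
      (u ∈ S → ((𝒯.Es t ∩ 𝒯.Es u).indicator (wb t) = - (𝒯.Es t ∩ 𝒯.Es u).indicator (wb u) ∧
        (𝒯.Es t ∩ 𝒯.Es u).indicator (wb t) ≠ 0)) ∧
      (u ∉ S → (𝒯.Es t ∩ 𝒯.Es u).indicator (wb t) = 0)

/-- The underlying vector (or covector) of `(S, vb)`: its value at `e ∈ E(𝒯)` is `vb t e`
if `e ∈ E(t)` for some `t ∈ S`, and `0` otherwise. -/
noncomputable def underlying (𝒯 : TreePres k α τ) (S : Set τ) (vb : τ → α → k) : α → k :=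
  open Classical in
  fun e => if h : e ∈ 𝒯.ground ∧ ∃ t, t ∈ S ∧ e ∈ 𝒯.Es t then vb h.2.choose e else 0

/-- The subspace of `k^{E(𝒯)}` generated by the underlying vectors of all pre-vectors
(appropriate for star-shaped trees, which contain no rays). -/
noncomputable def Vspace (𝒯 : TreePres k α τ) : Submodule k (α → k) :=
  Submodule.span k {u | ∃ S vb, 𝒯.IsPreVector S vb ∧ u = 𝒯.underlying S vb}

/-- The subspace of `k^{E(𝒯)}` generated by the underlying covectors of all pre-covectors
(appropriate for star-shaped trees, which contain no rays). -/
noncomputable def Wspace (𝒯 : TreePres k α τ) : Submodule k (α → k) :=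
  Submodule.span k {u | ∃ S wb, 𝒯.IsPreCovector S wb ∧ u = 𝒯.underlying S wb}

end TreePres

/-- A presentation `(V, W)` is neat with respect to a family `ℱ` of sets if for all
`v ∈ V`, `w ∈ W` only finitely many `F ∈ ℱ` meet the supports of both. -/
def NeatFam {k α : Type*} [Field k] (V W : Submodule k (α → k)) (ℱ : Set (Set α)) : Prop :=
  ∀ v ∈ V, ∀ w ∈ W,
    {F ∈ ℱ | (F ∩ Function.support v).Nonempty ∧ (F ∩ Function.support w).Nonempty}.Finite

/-- A tree of presentations is neat if each node's presentation is neat with respect to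
the family of sets `E(tu)` over the neighbours `u` of `t`. -/
def TreePres.IsNeat {k α τ : Type*} [Field k] (𝒯 : TreePres k α τ) : Prop :=
  ∀ t, NeatFam (𝒯.Vb t) (𝒯.Wb t) {F | ∃ u, 𝒯.T.Adj t u ∧ F = 𝒯.Es t ∩ 𝒯.Es u}

/-!
The nodes carrying both the pre-vector and the pre-covector form a subtree `A = S ∩ S'`.
Neatness makes `A` locally finite: distinct neighbours `u` of `t` in `A` give distinct sets
`E(tu)`, each meeting the supports of both `v̄(t)` and `w̄(t)`. As `A` contains no ray, it is
finite by Kőnig's lemma. Now `0 = Σ_{t ∈ A} Σ_e v̄(t)(e) w̄(t)(e)`, and after exchanging the sums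
the inner sum at `e` is the product of the underlying vector and covector at `e`: an element of
`E(𝒯)` lies in a single `E(t)`, while a dummy element of `E(tu)` is counted twice with opposite
signs if `u, t ∈ A`, and contributes nothing if `u ∉ A`, since then `v̄(t)` or `w̄(t)` vanishes
on `E(tu)`.
-/

namespace SimpleGraph

variable {V : Type*} {G : SimpleGraph V}

theorem IsAcyclic.not_adj_of_adj_of_adj (hG : G.IsAcyclic) {a b c : V} (hab : G.Adj a b)
    (hac : G.Adj a c) : ¬ G.Adj b c :=
  fun hbc => by
    classical exact hG.cliqueFree le_rfl {a, b, c} (is3Clique_triple_iff.mpr ⟨hab, hac, hbc⟩)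

theorem exists_isPath_of_preconnected_induce {s : Set V} (hs : (G.induce s).Preconnected)
    {a b : V} (ha : a ∈ s) (hb : b ∈ s) :
    ∃ p : G.Walk a b, p.IsPath ∧ ∀ x ∈ p.support, x ∈ s := by
  classical
  obtain ⟨w⟩ := hs ⟨a, ha⟩ ⟨b, hb⟩
  let w' := w.map (Embedding.induce s).toHom
  refine ⟨w'.bypass, w'.bypass_isPath, fun x hx => ?_⟩
  obtain ⟨y, -, rfl⟩ := List.mem_map.mp (w.support_map _ ▸ w'.support_bypass_subset_support hx)
  exact y.2

theorem IsAcyclic.preconnected_induce_inter (hG : G.IsAcyclic) {s t : Set V}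
    (hs : (G.induce s).Preconnected) (ht : (G.induce t).Preconnected) :
    (G.induce (s ∩ t)).Preconnected := by
  rintro ⟨a, has, hat⟩ ⟨b, hbs, hbt⟩
  obtain ⟨p, hp, hps⟩ := exists_isPath_of_preconnected_induce hs has hbs
  obtain ⟨q, hq, hqt⟩ := exists_isPath_of_preconnected_induce ht hat hbt
  obtain rfl : p = q := congrArg Subtype.val ((hG.subsingleton_path a b).elim ⟨p, hp⟩ ⟨q, hq⟩)
  exact ⟨p.induce (s ∩ t) fun x hx => ⟨hps x hx, hqt x hx⟩⟩

theorem finite_setOf_exists_walk_length_le (hfin : ∀ v, (G.neighborSet v).Finite) (n : ℕ)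
    (r : V) : {v | ∃ p : G.Walk r v, p.length ≤ n}.Finite := by
  induction n generalizing r with
  | zero =>
    refine (finite_singleton r).subset ?_
    rintro v ⟨p, hp⟩
    exact (Walk.eq_of_length_eq_zero (Nat.le_zero.mp hp)).symm
  | succ n ih =>
    refine ((finite_singleton r).union ((hfin r).biUnion fun u _ => ih u)).subset ?_
    rintro v ⟨_ | ⟨h, p⟩, hp⟩
    · exact Or.inl rfl
    · exact Or.inr (mem_biUnion h ⟨p, by simpa using hp⟩)

theorem Preconnected.exists_isPath_le_length [Infinite V] (hG : G.Preconnected)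
    (hfin : ∀ v, (G.neighborSet v).Finite) (r : V) (n : ℕ) :
    ∃ v, ∃ p : G.Walk r v, p.IsPath ∧ n ≤ p.length := by
  classical
  obtain ⟨v, hv⟩ := (finite_setOf_exists_walk_length_le hfin n r).infinite_compl.nonempty
  obtain ⟨w⟩ := hG r v
  refine ⟨v, w.bypass, w.bypass_isPath, ?_⟩
  by_contra! h
  exact hv ⟨w.bypass, h.le⟩

theorem Preconnected.exists_ray [Infinite V] (hG : G.Preconnected)
    (hfin : ∀ v, (G.neighborSet v).Finite) :
    ∃ f : ℕ → V, Injective f ∧ ∀ n, G.Adj (f n) (f (n + 1)) := by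
  obtain ⟨r⟩ : Nonempty V := inferInstance
  -- Injective paths `r = p 0, p 1, …, p n`; under restriction to initial segments they form an
  -- inverse system with finite fibres, and a compatible family of paths is a ray.
  let P (n : ℕ) := {p : Fin (n + 1) → V //
    p 0 = r ∧ Injective p ∧ ∀ j : Fin n, G.Adj (p j.castSucc) (p j.succ)}
  let π {i j : ℕ} (hij : i ≤ j) (p : P j) : P i :=
    ⟨p.1 ∘ Fin.castLE (by omega), p.2.1, p.2.2.1.comp (Fin.castLE_injective _),
      fun l => p.2.2.2 (l.castLE hij)⟩
  have : Subsingleton (P 0) := ⟨fun a b => Subtype.ext <| funext fun j => by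
    rw [Fin.fin_one_eq_zero j, a.2.1, b.2.1]⟩
  have : ∀ n, Nonempty (P n) := fun n => by
    obtain ⟨v, p, hp, hn⟩ := hG.exists_isPath_le_length hfin r n
    exact ⟨fun j => p.getVert j, p.getVert_zero,
      fun i j hij => Fin.ext (hp.getVert_injOn (by simp; omega) (by simp; omega) hij),
      fun j => p.adj_getVert_succ (by rw [Fin.val_castSucc]; omega)⟩
  obtain ⟨f, hf⟩ := exists_seq_forall_proj_of_forall_finite π (fun _ _ => rfl)
    (fun _ _ _ _ _ _ => rfl) fun i a => by
      refine Finite.of_finite_image (f := fun b : P (i + 1) => b.1 (Fin.last (i + 1)))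
        ((hfin (a.1 (Fin.last i))).subset ?_) ?_
      · rintro _ ⟨b, rfl, rfl⟩
        exact b.2.2.2 (Fin.last i)
      · rintro b rfl b' hb' hlast
        refine Subtype.ext (funext fun j => Fin.lastCases hlast (fun j => ?_) j)
        exact congrFun (congrArg Subtype.val hb'.symm) j
  have hlast : ∀ m n (h : m ≤ n), (f m).1 (Fin.last m) = (f n).1 ⟨m, by omega⟩ :=
    fun m n h => (congrFun (congrArg Subtype.val (hf h)) (Fin.last m)).symm
  refine ⟨fun n => (f n).1 (Fin.last n), fun m n hmn => ?_, fun n => ?_⟩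
  · have := (f (max m n)).2.2.1 <|
      (hlast m _ (le_max_left m n)).symm.trans (hmn.trans (hlast n _ (le_max_right m n)))
    exact congrArg Fin.val this
  · dsimp only
    rw [hlast n (n + 1) n.le_succ]
    exact (f (n + 1)).2.2.2 (Fin.last n)

theorem exists_ray_of_infinite {A : Set V} (hA : (G.induce A).Preconnected)
    (hfin : ∀ t ∈ A, {u | u ∈ A ∧ G.Adj t u}.Finite) (hinf : A.Infinite) :
    ∃ f : ℕ → V, Injective f ∧ (∀ n, f n ∈ A) ∧ ∀ n, G.Adj (f n) (f (n + 1)) := by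
  have := hinf.to_subtype
  obtain ⟨f, hf, hadj⟩ := hA.exists_ray fun t =>
    ((hfin t t.2).preimage Subtype.val_injective.injOn).subset fun u hu => ⟨u.2, hu⟩
  exact ⟨Subtype.val ∘ f, Subtype.val_injective.comp hf, fun n => (f n).2, hadj⟩

end SimpleGraph

namespace TreePres

variable {k α τ : Type*} [Field k] {𝒯 : TreePres k α τ} {S S' : Set τ} {vb wb : τ → α → k}
  {s t u u' : τ} {e : α}

theorem eq_of_adj_of_adj (htu : 𝒯.T.Adj t u) (htu' : 𝒯.T.Adj t u') (he : e ∈ 𝒯.Es u)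
    (he' : e ∈ 𝒯.Es u') : u = u' :=
  (𝒯.adjInter u u' ⟨e, he, he'⟩).resolve_right
    (𝒯.tree.isAcyclic.not_adj_of_adj_of_adj htu htu')

theorem eq_or_eq_of_adj (htu : 𝒯.T.Adj t u) (ht : e ∈ 𝒯.Es t) (hu : e ∈ 𝒯.Es u)
    (hs : e ∈ 𝒯.Es s) : s = t ∨ s = u :=
  (𝒯.adjInter s t ⟨e, hs, ht⟩).imp_right fun hst => eq_of_adj_of_adj hst.symm htu hs hu

theorem eq_of_mem_ground (he : e ∈ 𝒯.ground) (ht : e ∈ 𝒯.Es t) (ht' : e ∈ 𝒯.Es t') :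
    t = t' :=
  (𝒯.adjInter t t' ⟨e, ht, ht'⟩).resolve_right fun hadj =>
    he.2 (by simp only [mem_iUnion]; exact ⟨t, t', hadj, ht, ht'⟩)

theorem exists_adj_of_notMem_ground (he : e ∉ 𝒯.ground) (ht : e ∈ 𝒯.Es t) :
    ∃ u, 𝒯.T.Adj t u ∧ e ∈ 𝒯.Es u := by
  simp only [ground, mem_sdiff, mem_iUnion, not_and, not_not] at he
  obtain ⟨s, s', hadj, hs, hs'⟩ := he ⟨t, ht⟩
  rcases eq_or_ne s t with rfl | hst
  · exact ⟨s', hadj, hs'⟩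
  · exact ⟨s, (𝒯.adjInter t s ⟨e, ht, hs⟩).resolve_left hst.symm, hs⟩

theorem underlying_apply (he : e ∈ 𝒯.ground) (ht : t ∈ S) (hte : e ∈ 𝒯.Es t) :
    𝒯.underlying S vb e = vb t e := by
  have h : e ∈ 𝒯.ground ∧ ∃ t ∈ S, e ∈ 𝒯.Es t := ⟨he, t, ht, hte⟩
  rw [underlying, dif_pos h, eq_of_mem_ground he h.2.choose_spec.2 hte]

theorem underlying_eq_zero (h : ¬ (e ∈ 𝒯.ground ∧ ∃ t ∈ S, e ∈ 𝒯.Es t)) :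
    𝒯.underlying S vb e = 0 :=
  dif_neg h

namespace IsPreVector

theorem apply_eq_zero_of_notMem (hv : 𝒯.IsPreVector S vb) (ht : t ∈ S) (he : e ∉ 𝒯.Es t) :
    vb t e = 0 :=
  notMem_support.mp fun h => he ((𝒯.pres t).1 (hv.2.1 t ht) h)

theorem apply_eq_zero_of_adj_notMem (hv : 𝒯.IsPreVector S vb) (ht : t ∈ S) (htu : 𝒯.T.Adj t u)
    (hu : u ∉ S) (he : e ∈ 𝒯.Es t ∩ 𝒯.Es u) : vb t e = 0 := by
  simpa [indicator_of_mem he] using congrFun ((hv.2.2 t ht u htu).2 hu) e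

theorem apply_eq (hv : 𝒯.IsPreVector S vb) (ht : t ∈ S) (hu : u ∈ S) (htu : 𝒯.T.Adj t u)
    (he : e ∈ 𝒯.Es t ∩ 𝒯.Es u) : vb t e = vb u e := by
  simpa [indicator_of_mem he] using congrFun ((hv.2.2 t ht u htu).1 hu).1 e

theorem inter_support_nonempty (hv : 𝒯.IsPreVector S vb) (ht : t ∈ S) (hu : u ∈ S)
    (htu : 𝒯.T.Adj t u) :
    (𝒯.Es t ∩ 𝒯.Es u ∩ support (vb t)).Nonempty := by
  rw [inter_comm]
  exact not_disjoint_iff_nonempty_inter.mp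
    (indicator_eq_zero'.not.mp ((hv.2.2 t ht u htu).1 hu).2)

end IsPreVector

namespace IsPreCovector

theorem apply_eq_zero_of_notMem (hw : 𝒯.IsPreCovector S wb) (ht : t ∈ S) (he : e ∉ 𝒯.Es t) :
    wb t e = 0 :=
  notMem_support.mp fun h => he ((𝒯.pres t).2.1 (hw.2.1 t ht) h)

theorem apply_eq_zero_of_adj_notMem (hw : 𝒯.IsPreCovector S wb) (ht : t ∈ S) (htu : 𝒯.T.Adj t u)
    (hu : u ∉ S) (he : e ∈ 𝒯.Es t ∩ 𝒯.Es u) : wb t e = 0 := by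
  simpa [indicator_of_mem he] using congrFun ((hw.2.2 t ht u htu).2 hu) e

theorem apply_eq_neg (hw : 𝒯.IsPreCovector S wb) (ht : t ∈ S) (hu : u ∈ S) (htu : 𝒯.T.Adj t u)
    (he : e ∈ 𝒯.Es t ∩ 𝒯.Es u) : wb t e = -wb u e := by
  simpa [indicator_of_mem he] using congrFun ((hw.2.2 t ht u htu).1 hu).1 e

theorem inter_support_nonempty (hw : 𝒯.IsPreCovector S wb) (ht : t ∈ S) (hu : u ∈ S)
    (htu : 𝒯.T.Adj t u) :
    (𝒯.Es t ∩ 𝒯.Es u ∩ support (wb t)).Nonempty := by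
  rw [inter_comm]
  exact not_disjoint_iff_nonempty_inter.mp
    (indicator_eq_zero'.not.mp ((hw.2.2 t ht u htu).1 hu).2)

end IsPreCovector

theorem sum_mul_eq_zero_of_notMem_ground (hv : 𝒯.IsPreVector S vb)
    (hw : 𝒯.IsPreCovector S' wb) (hA : (S ∩ S').Finite) (he : e ∉ 𝒯.ground) :
    ∑ t ∈ hA.toFinset, vb t e * wb t e = 0 := by
  by_contra hne
  obtain ⟨t, htA, hte0⟩ := Finset.exists_ne_zero_of_sum_ne_zero hne
  rw [hA.mem_toFinset] at htA
  have hvt := left_ne_zero_of_mul hte0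
  have hwt := right_ne_zero_of_mul hte0
  have hte : e ∈ 𝒯.Es t := by_contra fun h => hvt (hv.apply_eq_zero_of_notMem htA.1 h)
  obtain ⟨u, htu, heu⟩ := exists_adj_of_notMem_ground he hte
  have huA : u ∈ S ∩ S' :=
    ⟨by_contra fun hu => hvt (hv.apply_eq_zero_of_adj_notMem htA.1 htu hu ⟨hte, heu⟩),
      by_contra fun hu => hwt (hw.apply_eq_zero_of_adj_notMem htA.2 htu hu ⟨hte, heu⟩)⟩
  refine hne ?_
  rw [Finset.sum_eq_add t u htu.ne ?_ ?_ ?_, hv.apply_eq htA.1 huA.1 htu ⟨hte, heu⟩,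
    hw.apply_eq_neg htA.2 huA.2 htu ⟨hte, heu⟩, mul_neg, neg_add_cancel]
  · intro s hs hst
    have hes : e ∉ 𝒯.Es s := fun hes => (eq_or_eq_of_adj htu hte heu hes).elim hst.1 hst.2
    rw [hv.apply_eq_zero_of_notMem (hA.mem_toFinset.mp hs).1 hes, zero_mul]
  · exact fun h => absurd (hA.mem_toFinset.mpr htA) h
  · exact fun h => absurd (hA.mem_toFinset.mpr huA) h

theorem sum_mul_eq_underlying_mul_of_mem_ground (hv : 𝒯.IsPreVector S vb)
    (hA : (S ∩ S').Finite) (he : e ∈ 𝒯.ground) :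
    ∑ t ∈ hA.toFinset, vb t e * wb t e = 𝒯.underlying S vb e * 𝒯.underlying S' wb e := by
  by_cases h : ∃ t ∈ S ∩ S', e ∈ 𝒯.Es t
  · obtain ⟨t, htA, hte⟩ := h
    rw [Finset.sum_eq_single_of_mem t (hA.mem_toFinset.mpr htA) fun s hs hst => ?_,
      underlying_apply he htA.1 hte, underlying_apply he htA.2 hte]
    rw [hv.apply_eq_zero_of_notMem (hA.mem_toFinset.mp hs).1
      fun hes => hst (eq_of_mem_ground he hes hte), zero_mul]
  · simp only [not_exists, not_and] at h
    rw [Finset.sum_eq_zero fun t ht => by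
      rw [hv.apply_eq_zero_of_notMem (hA.mem_toFinset.mp ht).1 (h t (hA.mem_toFinset.mp ht)),
        zero_mul]]
    by_cases hS : ∃ t ∈ S, e ∈ 𝒯.Es t
    · obtain ⟨t, htS, hte⟩ := hS
      rw [underlying_eq_zero (vb := wb) fun ⟨_, t', ht', hte'⟩ =>
        h t ⟨htS, eq_of_mem_ground he hte' hte ▸ ht'⟩ hte, mul_zero]
    · rw [underlying_eq_zero fun h' => hS h'.2, zero_mul]

theorem sum_mul_eq_underlying_mul (hv : 𝒯.IsPreVector S vb) (hw : 𝒯.IsPreCovector S' wb)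
    (hA : (S ∩ S').Finite) (e : α) :
    ∑ t ∈ hA.toFinset, vb t e * wb t e = 𝒯.underlying S vb e * 𝒯.underlying S' wb e := by
  by_cases he : e ∈ 𝒯.ground
  · exact sum_mul_eq_underlying_mul_of_mem_ground hv hA he
  · rw [sum_mul_eq_zero_of_notMem_ground hv hw hA he, underlying_eq_zero fun h => he h.1,
      zero_mul]

theorem orthog_underlying_of_finite (hv : 𝒯.IsPreVector S vb) (hw : 𝒯.IsPreCovector S' wb)
    (hA : (S ∩ S').Finite) : Orthog (𝒯.underlying S vb) (𝒯.underlying S' wb) := by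
  have hnode : ∀ t ∈ hA.toFinset, Orthog (vb t) (wb t) := fun t ht =>
    have htA := hA.mem_toFinset.mp ht
    (𝒯.pres t).2.2.1 _ (hv.2.1 t htA.1) _ (hw.2.1 t htA.2)
  have hsupp : ∀ t ∈ hA.toFinset, (support fun e => vb t e * wb t e).Finite := fun t ht => by
    rw [support_mul]
    exact (hnode t ht).1
  constructor
  · rw [← support_mul]
    refine (hA.toFinset.finite_toSet.biUnion hsupp).subset fun e he => ?_
    rw [mem_support, ← sum_mul_eq_underlying_mul hv hw hA e] at he
    obtain ⟨t, ht, hne⟩ := Finset.exists_ne_zero_of_sum_ne_zero he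
    exact mem_biUnion ht hne
  · calc ∑ᶠ e, 𝒯.underlying S vb e * 𝒯.underlying S' wb e
        = ∑ᶠ e, ∑ t ∈ hA.toFinset, vb t e * wb t e :=
          finsum_congr fun e => (sum_mul_eq_underlying_mul hv hw hA e).symm
      _ = ∑ t ∈ hA.toFinset, ∑ᶠ e, vb t e * wb t e := finsum_sum_comm _ _ hsupp
      _ = 0 := Finset.sum_eq_zero fun t ht => (hnode t ht).2

theorem IsNeat.finite_adj_inter (hneat : 𝒯.IsNeat) (hv : 𝒯.IsPreVector S vb)
    (hw : 𝒯.IsPreCovector S' wb) (ht : t ∈ S ∩ S') :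
    {u | u ∈ S ∩ S' ∧ 𝒯.T.Adj t u}.Finite := by
  refine Finite.of_finite_image (f := fun u => 𝒯.Es t ∩ 𝒯.Es u)
    ((hneat t _ (hv.2.1 t ht.1) _ (hw.2.1 t ht.2)).subset ?_) ?_
  · rintro _ ⟨u, ⟨hu, htu⟩, rfl⟩
    exact ⟨⟨u, htu, rfl⟩, hv.inter_support_nonempty ht.1 hu.1 htu,
      hw.inter_support_nonempty ht.2 hu.2 htu⟩
  · rintro u ⟨hu, htu⟩ u' ⟨-, htu'⟩ hEq
    obtain ⟨e, he, -⟩ := hv.inter_support_nonempty ht.1 hu.1 htu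
    exact eq_of_adj_of_adj htu htu' he.2 ((Set.ext_iff.mp hEq e).mp he).2

end TreePres

/-- In a neat tree of presentations, if `(S, vb)` is a pre-vector and
`(S', wb)` a pre-covector such that the intersection of the two subtrees contains no ray,
then the underlying vector and covector are orthogonal: the intersection of their supports
is finite and the sum over `E(𝒯)` of the products of their values is `0`. -/
theorem neat_underlying_orthogonal {k α τ : Type*} [Field k]
    (𝒯 : TreePres k α τ) (hneat : 𝒯.IsNeat)
    (S : Set τ) (vb : τ → α → k) (hv : 𝒯.IsPreVector S vb)
    (S' : Set τ) (wb : τ → α → k) (hw : 𝒯.IsPreCovector S' wb)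
    (hray : ¬ ∃ f : ℕ → τ, Function.Injective f ∧ (∀ n, f n ∈ S ∩ S') ∧
      ∀ n, 𝒯.T.Adj (f n) (f (n + 1))) :
    Orthog (𝒯.underlying S vb) (𝒯.underlying S' wb) := by
  have hA : (S ∩ S').Finite := by
    by_contra hinf
    have hconn := 𝒯.tree.isAcyclic.preconnected_induce_inter hv.1.preconnected hw.1.preconnected
    exact hray (SimpleGraph.exists_ray_of_infinite hconn
      (fun t ht => hneat.finite_adj_inter hv hw ht) hinf)
  exact 𝒯.orthog_underlying_of_finite hv hw hA
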